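/- arXiv:2006.05130 — 7 statements merged into one kernel-verified Lean document; each statement's English description precedes it below -/
import Mathlib

section
/- Let p be a positive integer and b > 0. Then for every real x ≤ b one has T_{p+1}(x) ≤ (max(x^p, 0) / b^p) · T_{p+1}(b). -/
/-!
By the integral form of Taylor's theorem and the substitution `s = x t`,
`T (n + 2) x = x ^ (n + 1) / n! * J x` with `J x = ∫₀¹ exp (x (1 - t)) tⁿ dt`.
The integral `J` is nonnegative and monotone in `x`, so for `x ≤ b` the factor `x ^ (n + 1)` may be
replaced by `max (x ^ (n + 1)) 0` and `J x` by `J b = n! T (n + 2) b / b ^ (n + 1)`.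
-/

open Real Finset

/-- `T p x = exp x - ∑_{j=0}^{p-2} x^j / j!`, the Taylor remainder of the exponential
function of order `p - 2` at `0` (empty sum convention gives `T 1 x = exp x`). -/
noncomputable def T (p : ℕ) (x : ℝ) : ℝ :=
  Real.exp x - ∑ j ∈ Finset.range (p - 1), x ^ j / (j.factorial : ℝ)

theorem hasDerivAt_sum_range_pow_div_factorial (n : ℕ) (x : ℝ) :
    HasDerivAt (fun y : ℝ => ∑ j ∈ range (n + 1), y ^ j / j.factorial)
      (∑ j ∈ range n, x ^ j / j.factorial) x := by
  induction n with
  | zero => simpa using hasDerivAt_const x (1 : ℝ)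
  | succ n ih =>
    simp only [sum_range_succ _ (n + 1)]
    refine (ih.add ((hasDerivAt_pow (n + 1) x).div_const ((n + 1).factorial : ℝ))).congr_deriv ?_
    rw [sum_range_succ, Nat.factorial_succ]
    push_cast
    field_simp

theorem hasDerivAt_T_add_one (n : ℕ) (x : ℝ) : HasDerivAt (T (n + 1)) (T n x) x := by
  rcases n with _ | n
  · have hT1 : T 1 = exp := funext fun y => by simp [T]
    simpa [hT1, T] using Real.hasDerivAt_exp x
  · exact (Real.hasDerivAt_exp x).sub (hasDerivAt_sum_range_pow_div_factorial n x)

theorem T_add_one_sub_T_add_two (n : ℕ) (x : ℝ) :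
    T (n + 1) x - T (n + 2) x = x ^ n / n.factorial := by
  simp [T, sum_range_succ]

theorem T_add_two_zero (n : ℕ) : T (n + 2) 0 = 0 := by
  simp [T, sum_range_succ']

theorem T_add_two_eq_integral (n : ℕ) (x : ℝ) :
    T (n + 2) x = (∫ s in (0 : ℝ)..x, exp (x - s) * s ^ n) / n.factorial := by
  have hderiv : ∀ y, HasDerivAt (fun y => exp (-y) * T (n + 2) y)
      (exp (-y) * y ^ n / n.factorial) y := by
    intro y
    refine (((hasDerivAt_neg y).exp).mul (hasDerivAt_T_add_one (n + 1) y)).congr_deriv ?_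
    rw [mul_div_assoc, ← T_add_one_sub_T_add_two]
    ring
  have hftc := intervalIntegral.integral_eq_sub_of_hasDerivAt (fun y _ => hderiv y)
    ((by fun_prop : Continuous fun s : ℝ => exp (-s) * s ^ n / n.factorial).intervalIntegrable 0 x)
  rw [T_add_two_zero, mul_zero, sub_zero] at hftc
  calc T (n + 2) x = exp x * (exp (-x) * T (n + 2) x) := by
        rw [← mul_assoc, ← exp_add, add_neg_cancel, exp_zero, one_mul]
    _ = (∫ s in (0 : ℝ)..x, exp (x - s) * s ^ n) / n.factorial := by
        rw [← hftc, ← intervalIntegral.integral_const_mul, ← intervalIntegral.integral_div]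
        congr 1
        funext s
        rw [sub_eq_add_neg, exp_add]
        ring

noncomputable def expRemainderIntegral (n : ℕ) (x : ℝ) : ℝ :=
  ∫ t in (0 : ℝ)..1, exp (x * (1 - t)) * t ^ n

theorem T_add_two_eq_pow_mul_expRemainderIntegral (n : ℕ) (x : ℝ) :
    T (n + 2) x = x ^ (n + 1) / n.factorial * expRemainderIntegral n x := by
  have hsubst := intervalIntegral.smul_integral_comp_mul_left
    (fun s => exp (x - s) * s ^ n) x (a := 0) (b := 1)
  simp only [mul_zero, mul_one, smul_eq_mul] at hsubst
  have hscale : ∫ t in (0 : ℝ)..1, exp (x - x * t) * (x * t) ^ n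
      = x ^ n * expRemainderIntegral n x := by
    rw [expRemainderIntegral, ← intervalIntegral.integral_const_mul]
    congr 1
    funext t
    rw [mul_pow, mul_sub, mul_one]
    ring
  rw [T_add_two_eq_integral, ← hsubst, hscale]
  ring

theorem expRemainderIntegral_nonneg (n : ℕ) (x : ℝ) : 0 ≤ expRemainderIntegral n x :=
  intervalIntegral.integral_nonneg zero_le_one fun _ ⟨ht0, _⟩ => by positivity

theorem expRemainderIntegral_mono (n : ℕ) : Monotone (expRemainderIntegral n) := by
  intro x y hxy
  refine intervalIntegral.integral_mono_on zero_le_one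
    (Continuous.intervalIntegrable (by fun_prop) _ _)
    (Continuous.intervalIntegrable (by fun_prop) _ _) fun t ⟨ht0, ht1⟩ => ?_
  have h1t : 0 ≤ 1 - t := sub_nonneg.2 ht1
  gcongr

theorem statement0 (p : ℕ) (hp : 1 ≤ p) (b : ℝ) (hb : 0 < b) (x : ℝ) (hx : x ≤ b) :
    T (p + 1) x ≤ max (x ^ p) 0 / b ^ p * T (p + 1) b := by
  obtain ⟨n, rfl⟩ : ∃ n, p = n + 1 := ⟨p - 1, by omega⟩
  have hJx := expRemainderIntegral_nonneg n x
  calc T (n + 1 + 1) x = x ^ (n + 1) / n.factorial * expRemainderIntegral n x :=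
        T_add_two_eq_pow_mul_expRemainderIntegral n x
    _ ≤ max (x ^ (n + 1)) 0 / n.factorial * expRemainderIntegral n x := by
        gcongr
        exact le_max_left _ _
    _ ≤ max (x ^ (n + 1)) 0 / n.factorial * expRemainderIntegral n b := by
        gcongr
        exact expRemainderIntegral_mono n hx
    _ = max (x ^ (n + 1)) 0 / b ^ (n + 1) * T (n + 1 + 1) b := by
        rw [T_add_two_eq_pow_mul_expRemainderIntegral]
        field_simp
end

section
/- Let p be a positive integer, b > 0, and let X be a random variable with P(X ≤ b) = 1 and E|X|^p < ∞. Then for every s ≥ 0: E[exp(sX)] ≤ (E[max(X^p, 0)] / b^p) · (exp(sb) − ∑_{j=0}^{p−1} (sb)^j/j!) + E[∑_{j=0}^{p−1} s^j X^j / j!] = (E[max(X^p, 0)] / b^p) · T_{p+1}(sb) + E[∑_{j=0}^{p−1} s^j X^j / j!]. -/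
/-!
Write `R y = T (p + 1) y = exp y - ∑_{j<p} y^j/j!`. For `s ≥ 0` and `x ≤ b` one has the pointwise
bound `R (s x) ≤ max (x^p) 0 / b^p * R (s b)`. For `x ≥ 0` this is a termwise comparison of the
series `∑_{n ≥ p} (s x)^n/n!` with `(x/b)^p ∑_{n ≥ p} (s b)^n/n!`. For `x < 0` the Lagrange form
`R (s x) = e^ξ (s x)^p/p!` with `ξ ≤ 0` gives `R (s x) ≤ max ((s x)^p) 0 / p!`, and
`(s b)^p/p! ≤ R (s b)`. Adding `∑_{j<p} (s x)^j/j!` to both sides and integrating against the law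
of `X`, which lives on `(-∞, b]`, gives the theorem.
-/

open Real Finset MeasureTheory

open scoped Nat

lemma T_succ_eq_tsum (p : ℕ) (y : ℝ) :
    T (p + 1) y = ∑' n : ℕ, y ^ (n + p) / (n + p)! := by
  have h := (Real.summable_pow_div_factorial y).sum_add_tsum_nat_add p
  rw [T, Nat.add_sub_cancel, sub_eq_iff_eq_add', h, Real.exp_eq_exp_ℝ, NormedSpace.exp_eq_tsum_div]

lemma T_succ_mul_le_pow_mul {t z : ℝ} (p : ℕ) (ht₀ : 0 ≤ t) (ht₁ : t ≤ 1) (hz : 0 ≤ z) :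
    T (p + 1) (t * z) ≤ t ^ p * T (p + 1) z := by
  rw [T_succ_eq_tsum, T_succ_eq_tsum, ← tsum_mul_left]
  have hsum := fun x : ℝ => (summable_nat_add_iff p).2 (Real.summable_pow_div_factorial x)
  refine (hsum _).tsum_le_tsum (fun n => ?_) ((hsum z).mul_left _)
  rw [mul_div_assoc', mul_pow, pow_add t]
  gcongr
  exact mul_le_of_le_one_left (by positivity) (pow_le_one₀ ht₀ ht₁)

lemma pow_div_factorial_le_T_succ (p : ℕ) {y : ℝ} (hy : 0 ≤ y) : y ^ p / p ! ≤ T (p + 1) y := by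
  have h := sum_le_exp_of_nonneg hy (p + 1)
  rw [sum_range_succ] at h
  rw [T, Nat.add_sub_cancel]
  linarith

lemma taylorWithinEval_exp_zero (n : ℕ) {s : Set ℝ} (hs : UniqueDiffOn ℝ s) (h0 : (0 : ℝ) ∈ s)
    (y : ℝ) : taylorWithinEval exp n s 0 y = ∑ j ∈ range (n + 1), y ^ j / j ! := by
  rw [taylor_within_apply]
  refine sum_congr rfl fun j _ => ?_
  rw [iteratedDerivWithin_eq_iteratedDeriv hs contDiff_exp.contDiffAt h0,
    iteratedDeriv_eq_iterate, iter_deriv_exp]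
  simp [div_eq_inv_mul]

lemma T_succ_le_of_nonpos (p : ℕ) {y : ℝ} (hy : y ≤ 0) : T (p + 1) y ≤ max (y ^ p) 0 / p ! := by
  rcases p with _ | n
  · simpa [T] using exp_le_one_iff.2 hy
  rcases hy.eq_or_lt with rfl | hy
  · simp [T, sum_range_succ']
  obtain ⟨ξ, hξ, h⟩ := taylor_mean_remainder_lagrange_iteratedDeriv (f := exp) (x₀ := 0) (n := n)
    hy.ne' contDiff_exp.contDiffOn
  rw [taylorWithinEval_exp_zero n (uniqueDiffOn_uIcc hy.ne') Set.left_mem_uIcc,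
    iteratedDeriv_eq_iterate, iter_deriv_exp, sub_zero] at h
  have hξ1 : exp ξ ≤ 1 := exp_le_one_iff.2 (Set.uIoo_of_ge hy.le ▸ hξ).2.le
  have hmul : exp ξ * y ^ (n + 1) ≤ max (y ^ (n + 1)) 0 := by
    rcases le_total 0 (y ^ (n + 1)) with ha | ha
    · nlinarith [le_max_left (y ^ (n + 1)) 0]
    · nlinarith [le_max_right (y ^ (n + 1)) 0, exp_pos ξ]
  simp only [T, Nat.add_sub_cancel, h]
  gcongr

lemma T_succ_mul_le_of_le (p : ℕ) {s b x : ℝ} (hs : 0 ≤ s) (hb : 0 < b) (hxb : x ≤ b) :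
    T (p + 1) (s * x) ≤ max (x ^ p) 0 / b ^ p * T (p + 1) (s * b) := by
  rcases le_or_gt 0 x with hx | hx
  · rw [max_eq_left (pow_nonneg hx p), ← div_pow]
    convert T_succ_mul_le_pow_mul p (div_nonneg hx hb.le) ((div_le_one hb).2 hxb)
      (mul_nonneg hs hb.le) using 2
    field_simp
  · calc T (p + 1) (s * x) ≤ max ((s * x) ^ p) 0 / p ! :=
          T_succ_le_of_nonpos p (mul_nonpos_of_nonneg_of_nonpos hs hx.le)
      _ = max (x ^ p) 0 / b ^ p * ((s * b) ^ p / p !) := by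
          have hmax : max ((s * x) ^ p) 0 = s ^ p * max (x ^ p) 0 := by
            rw [mul_max_of_nonneg _ _ (pow_nonneg hs p), mul_zero, mul_pow]
          rw [hmax, mul_pow]
          field_simp
      _ ≤ max (x ^ p) 0 / b ^ p * T (p + 1) (s * b) := by
          gcongr
          exact pow_div_factorial_le_T_succ p (mul_nonneg hs hb.le)

lemma exp_mul_le_of_le (p : ℕ) {s b x : ℝ} (hs : 0 ≤ s) (hb : 0 < b) (hxb : x ≤ b) :
    exp (s * x) ≤ max (x ^ p) 0 / b ^ p * T (p + 1) (s * b)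
      + ∑ j ∈ range p, s ^ j * x ^ j / j ! := by
  have h := T_succ_mul_le_of_le p hs hb hxb
  simp only [T, Nat.add_sub_cancel, mul_pow] at h ⊢
  linarith

lemma integrable_pow_of_integrable_abs_pow {Ω : Type*} [MeasurableSpace Ω] {μ : Measure Ω}
    [IsFiniteMeasure μ] {X : Ω → ℝ} {j p : ℕ} (hX : AEStronglyMeasurable X μ) (hjp : j ≤ p)
    (hint : Integrable (fun ω => |X ω| ^ p) μ) : Integrable (fun ω => X ω ^ j) μ :=
  (integrable_norm_iff (hX.pow j)).1 <| by
    simpa only [Pi.pow_apply, norm_pow] using integrable_norm_pow_of_le hX hjp hint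

theorem statement1_general {Ω : Type*} [MeasurableSpace Ω] (P : Measure Ω) [IsProbabilityMeasure P]
    (p : ℕ) (b : ℝ) (hb : 0 < b)
    (X : Ω → ℝ) (hX : Measurable X)
    (hXb : P {ω | X ω ≤ b} = 1)
    (hint : Integrable (fun ω => |X ω| ^ p) P)
    (s : ℝ) (hs : 0 ≤ s) :
    ∫ ω, Real.exp (s * X ω) ∂P ≤
      (∫ ω, max ((X ω) ^ p) 0 ∂P) / b ^ p * T (p + 1) (s * b)
        + ∫ ω, ∑ j ∈ Finset.range p, s ^ j * (X ω) ^ j / (j.factorial : ℝ) ∂P := by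
  have hle : ∀ᵐ ω ∂P, X ω ≤ b :=
    (ae_iff_measure_eq (measurableSet_le hX measurable_const).nullMeasurableSet).2
      (by rw [hXb, measure_univ])
  have hpos : Integrable (fun ω => max (X ω ^ p) 0) P :=
    (integrable_pow_of_integrable_abs_pow hX.aestronglyMeasurable le_rfl hint).pos_part
  have hpoly : Integrable (fun ω => ∑ j ∈ range p, s ^ j * X ω ^ j / (j.factorial : ℝ)) P :=
    integrable_finsetSum _ fun j hj => ((integrable_pow_of_integrable_abs_pow
      hX.aestronglyMeasurable (mem_range.1 hj).le hint).const_mul _).div_const _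
  have hbound := (hpos.div_const (b ^ p)).mul_const (T (p + 1) (s * b))
  have hexp : Integrable (fun ω => exp (s * X ω)) P := by
    refine (hbound.add hpoly).mono' (by fun_prop) (hle.mono fun ω h => ?_)
    rw [norm_of_nonneg (exp_pos _).le]
    exact exp_mul_le_of_le p hs hb h
  calc ∫ ω, exp (s * X ω) ∂P
      ≤ ∫ ω, (max (X ω ^ p) 0 / b ^ p * T (p + 1) (s * b)
          + ∑ j ∈ range p, s ^ j * X ω ^ j / (j.factorial : ℝ)) ∂P :=
        integral_mono_ae hexp (hbound.add hpoly) (hle.mono fun ω => exp_mul_le_of_le p hs hb)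
    _ = _ := by rw [integral_add hbound hpoly, integral_mul_const, integral_div]

theorem statement1 {Ω : Type*} [MeasurableSpace Ω] (P : Measure Ω) [IsProbabilityMeasure P]
    (p : ℕ) (hp : 1 ≤ p) (b : ℝ) (hb : 0 < b)
    (X : Ω → ℝ) (hX : Measurable X)
    (hXb : P {ω | X ω ≤ b} = 1)
    (hint : Integrable (fun ω => |X ω| ^ p) P)
    (s : ℝ) (hs : 0 ≤ s) :
    ∫ ω, Real.exp (s * X ω) ∂P ≤
      (∫ ω, max ((X ω) ^ p) 0 ∂P) / b ^ p * T (p + 1) (s * b)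
        + ∫ ω, ∑ j ∈ Finset.range p, s ^ j * (X ω) ^ j / (j.factorial : ℝ) ∂P :=
  statement1_general P p b hb X hX hXb hint s hs
end

section
/- Let b > 0, let p ≥ 2 be an even integer, let s > 0, and let X be a random variable with P(X ≤ b) = 1 and E|X|^p < ∞. Then m_{X,s}(p) ≥ m_{X,s}(p+1), where m_{X,s}(q) := (E[max(X^q, 0)] / b^q) · T_{q+1}(sb) + E[∑_{j=0}^{q−1} s^j X^j / j!]. -/
open Real Finset MeasureTheory

/-- `m X s b q = (E[max(X^q,0)] / b^q) * T_{q+1}(s b) + E[∑_{j=0}^{q-1} s^j X^j / j!]`. -/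
noncomputable def m {Ω : Type*} [MeasurableSpace Ω] (P : Measure Ω) (X : Ω → ℝ) (s b : ℝ)
    (q : ℕ) : ℝ :=
  (∫ ω, max ((X ω) ^ q) 0 ∂P) / b ^ q * T (q + 1) (s * b)
    + ∫ ω, ∑ j ∈ Finset.range q, s ^ j * (X ω) ^ j / (j.factorial : ℝ) ∂P

/- For even `p` we have `max (X^p) 0 = X^p`, and splitting the last term `(s b)^p / p!` off
`T_{p+1}(s b)` moves `s^p E[X^p] / p!` into the polynomial part, so that `m(p)` and `m(p+1)` share
that part and differ only in the coefficient of `T_{p+2}(s b) ≥ 0`. These coefficients compare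
through the pointwise bound `max (x^(p+1)) 0 ≤ b x^p` for `x ≤ b`. -/

lemma T_nonneg (n : ℕ) {x : ℝ} (hx : 0 ≤ x) : 0 ≤ T n x :=
  sub_nonneg.mpr (sum_le_exp_of_nonneg hx _)

lemma T_eq_T_succ_add (n : ℕ) (x : ℝ) : T (n + 1) x = T (n + 2) x + x ^ n / n.factorial := by
  simp only [T, Nat.add_sub_cancel, Nat.reduceSubDiff, sum_range_succ]
  ring

lemma max_pow_succ_zero_le {p : ℕ} (hp : Even p) {x b : ℝ} (hxb : x ≤ b) (hb : 0 ≤ b) :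
    max (x ^ (p + 1)) 0 ≤ b * x ^ p := by
  rcases le_total 0 x with hx | hx
  · rw [max_eq_left (by positivity), pow_succ']
    exact mul_le_mul_of_nonneg_right hxb (hp.pow_nonneg x)
  · rw [max_eq_right (hp.add_one.pow_nonpos hx)]
    exact mul_nonneg hb (hp.pow_nonneg x)

section Integrals

variable {Ω : Type*} [MeasurableSpace Ω] {P : Measure Ω} {X : Ω → ℝ}

lemma integrable_pow_of_le [IsFiniteMeasure P] (hX : AEStronglyMeasurable X P) {j p : ℕ}
    (hjp : j ≤ p) (hint : Integrable (fun ω => |X ω| ^ p) P) :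
    Integrable (fun ω => X ω ^ j) P :=
  (integrable_norm_iff (hX.pow j)).mp <| by
    simpa [abs_pow] using integrable_norm_pow_of_le hX hjp (by simpa using hint)

lemma integral_max_pow_succ_zero_le {p : ℕ} (hp : Even p) {b : ℝ} (hb : 0 ≤ b)
    (hXb : ∀ᵐ ω ∂P, X ω ≤ b) (hX : AEStronglyMeasurable X P)
    (hint : Integrable (fun ω => X ω ^ p) P) :
    ∫ ω, max (X ω ^ (p + 1)) 0 ∂P ≤ b * ∫ ω, X ω ^ p ∂P := by
  have hbound : ∀ᵐ ω ∂P, max (X ω ^ (p + 1)) 0 ≤ b * X ω ^ p := by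
    filter_upwards [hXb] with ω hω using max_pow_succ_zero_le hp hω hb
  have hint_max : Integrable (fun ω => max (X ω ^ (p + 1)) 0) P := by
    refine (hint.const_mul b).mono' ((hX.pow _).sup aestronglyMeasurable_const) ?_
    filter_upwards [hbound] with ω hω
    rwa [Real.norm_eq_abs, abs_of_nonneg (le_max_right _ _)]
  rw [← integral_const_mul]
  exact integral_mono_ae hint_max (hint.const_mul b) hbound

lemma m_eq_of_even [IsFiniteMeasure P] {p : ℕ} (hp : Even p) {b : ℝ} (hb : b ≠ 0) (s : ℝ)
    (hX : AEStronglyMeasurable X P) (hint : Integrable (fun ω => |X ω| ^ p) P) :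
    m P X s b p = (∫ ω, X ω ^ p ∂P) / b ^ p * T (p + 2) (s * b)
      + ∫ ω, ∑ j ∈ range (p + 1), s ^ j * X ω ^ j / j.factorial ∂P := by
  have hterm : ∀ j ≤ p, Integrable (fun ω => s ^ j * X ω ^ j / j.factorial) P := fun j hj =>
    ((integrable_pow_of_le hX hj hint).const_mul _).div_const _
  have hsplit : ∫ ω, ∑ j ∈ range (p + 1), s ^ j * X ω ^ j / j.factorial ∂P
      = (∫ ω, ∑ j ∈ range p, s ^ j * X ω ^ j / j.factorial ∂P)
        + ∫ ω, s ^ p * X ω ^ p / p.factorial ∂P := by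
    simp only [sum_range_succ]
    exact integral_add (integrable_finsetSum _ fun j hj => hterm j (mem_range.mp hj).le)
      (hterm p le_rfl)
  have hmax : (fun ω => max (X ω ^ p) 0) = fun ω => X ω ^ p :=
    funext fun ω => max_eq_left (hp.pow_nonneg _)
  rw [m, hmax, T_eq_T_succ_add, hsplit, integral_div, integral_const_mul, mul_pow]
  field_simp
  ring

end Integrals

theorem statement2_general {Ω : Type*} [MeasurableSpace Ω] (P : Measure Ω) [IsProbabilityMeasure P]
    (b : ℝ) (hb : 0 < b) (p : ℕ) (hpeven : Even p)
    (s : ℝ) (hs : 0 < s)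
    (X : Ω → ℝ) (hX : Measurable X)
    (hXb : P {ω | X ω ≤ b} = 1)
    (hint : Integrable (fun ω => |X ω| ^ p) P) :
    m P X s b (p + 1) ≤ m P X s b p := by
  have hXb_ae : ∀ᵐ ω ∂P, X ω ≤ b := by
    rw [ae_iff_measure_eq (measurableSet_le hX measurable_const).nullMeasurableSet, hXb,
      measure_univ]
  have hint_pow : Integrable (fun ω => X ω ^ p) P := by
    simpa only [hpeven.pow_abs] using hint
  have hcoeff : (∫ ω, max (X ω ^ (p + 1)) 0 ∂P) / b ^ (p + 1) ≤ (∫ ω, X ω ^ p ∂P) / b ^ p := by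
    calc (∫ ω, max (X ω ^ (p + 1)) 0 ∂P) / b ^ (p + 1)
        ≤ b * (∫ ω, X ω ^ p ∂P) / b ^ (p + 1) := by
          gcongr
          exact integral_max_pow_succ_zero_le hpeven hb.le hXb_ae hX.aestronglyMeasurable hint_pow
      _ = (∫ ω, X ω ^ p ∂P) / b ^ p := by
          rw [pow_succ', mul_div_mul_left _ _ hb.ne']
  rw [m_eq_of_even hpeven hb.ne' s hX.aestronglyMeasurable hint, m]
  gcongr
  exact T_nonneg _ (by positivity)

theorem statement2 {Ω : Type*} [MeasurableSpace Ω] (P : Measure Ω) [IsProbabilityMeasure P]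
    (b : ℝ) (hb : 0 < b) (p : ℕ) (hp : 2 ≤ p) (hpeven : Even p)
    (s : ℝ) (hs : 0 < s)
    (X : Ω → ℝ) (hX : Measurable X)
    (hXb : P {ω | X ω ≤ b} = 1)
    (hint : Integrable (fun ω => |X ω| ^ p) P) :
    m P X s b (p + 1) ≤ m P X s b p :=
  statement2_general P b hb p hpeven s hs X hX hXb hint
end

section
/- Let p be a positive integer, b > 0, and let X be a random variable with P(X ∈ [0, b]) = 1 and P(X > 0) > 0. Define z(s) := (E[X^p] / b^p) · T_{p+1}(sb) + E[∑_{j=0}^{p−1} s^j X^j / j!]. Then the derivative z' of z is positive on (0, ∞) and the function s ↦ log(z'(s)) is convex on (0, ∞). -/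
/-!
Write `m j = E[X ^ j]` and `c = m p / b ^ p`. Since `T (p + 1) x = ∑_{j ≥ p} x ^ j / j!`,
we have `z s = ∑_j v j * s ^ j / j!` with `v j = m j` for `j < p` and `v j = c * b ^ j` for `j ≥ p`;
equivalently `z` is `c * exp (b s)` plus a polynomial, a form that differentiation preserves while
shifting the coefficient sequence. The moments are log-convex (`m (k+1) ^ 2 ≤ m k * m (k+2)`,
from `E[X ^ k * (t - X) ^ 2] ≥ 0` for all `t`) and satisfy `m (j+1) ≤ b * m j` because
`X ≤ b`, so `v` is log-convex too. Cauchy–Schwarz for the series of `z'`, `z''`, `z'''` then gives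
`z'' ^ 2 ≤ z' * z'''`, which is the convexity of `log z'`.
-/

open Real Finset MeasureTheory

open Filter ProbabilityTheory
open scoped Nat

theorem sq_le_mul_of_hasSum {ι : Type*} {r f g : ι → ℝ} {A B C : ℝ} (hr : HasSum r A)
    (hf : HasSum f B) (hg : HasSum g C) (hf₀ : ∀ i, 0 ≤ f i) (hg₀ : ∀ i, 0 ≤ g i)
    (h : ∀ i, r i ^ 2 ≤ f i * g i) : A ^ 2 ≤ B * C :=
  le_of_tendsto_of_tendsto' (hr.pow 2) (Tendsto.mul hf hg) fun s =>
    sum_sq_le_sum_mul_sum_of_sq_le_mul s (fun i _ => hf₀ i) (fun i _ => hg₀ i) fun i _ => h i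

theorem convexOn_log_of_sq_deriv_le {D : Set ℝ} (hD : Convex ℝ D) (hDo : IsOpen D)
    {f f' f'' : ℝ → ℝ} (hf : ∀ x ∈ D, HasDerivAt f (f' x) x)
    (hf' : ∀ x ∈ D, HasDerivAt f' (f'' x) x) (hpos : ∀ x ∈ D, 0 < f x)
    (h : ∀ x ∈ D, f' x ^ 2 ≤ f x * f'' x) : ConvexOn ℝ D fun x => log (f x) := by
  refine convexOn_of_hasDerivWithinAt2_nonneg (f' := fun x => f' x / f x)
    (f'' := fun x => (f'' x * f x - f' x * f' x) / f x ^ 2) hD ?_ ?_ ?_ ?_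
  · exact fun x hx => ((hf x hx).log (hpos x hx).ne').continuousAt.continuousWithinAt
  all_goals rw [hDo.interior_eq]
  · exact fun x hx => ((hf x hx).log (hpos x hx).ne').hasDerivWithinAt
  · exact fun x hx => ((hf' x hx).div (hf x hx) (hpos x hx).ne').hasDerivWithinAt
  · intro x hx
    have := h x hx
    exact div_nonneg (by nlinarith) (sq_nonneg _)

theorem hasDerivAt_sum_range_mul_pow_div_factorial (d : ℕ → ℝ) (n : ℕ) (s : ℝ) :
    HasDerivAt (fun s => ∑ j ∈ range n, d j * s ^ j / j !)
      (∑ j ∈ range (n - 1), d (j + 1) * s ^ j / j !) s := by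
  have hterm (j : ℕ) :
      HasDerivAt (fun s : ℝ => d j * s ^ j / j !) (d j * (j * s ^ (j - 1)) / j !) s :=
    ((hasDerivAt_pow j s).const_mul (d j)).div_const _
  refine (HasDerivAt.fun_sum fun j (_ : j ∈ range n) => hterm j).congr_deriv ?_
  cases n with
  | zero => simp
  | succ n =>
    rw [sum_range_succ', Nat.add_sub_cancel]
    simp only [CharP.cast_eq_zero, zero_mul, mul_zero, zero_div, add_zero]
    refine sum_congr rfl fun j _ => ?_
    rw [Nat.factorial_succ, Nat.add_sub_cancel]
    push_cast
    field_simp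

noncomputable def expPoly (α b : ℝ) (d : ℕ → ℝ) (n : ℕ) (s : ℝ) : ℝ :=
  α * exp (s * b) + ∑ j ∈ range n, d j * s ^ j / j !

def expPolyCoeff (α b : ℝ) (d : ℕ → ℝ) (j : ℕ) : ℝ := d j + α * b ^ j

section ExpPoly

variable {α b : ℝ} {d : ℕ → ℝ} {n : ℕ}

theorem hasDerivAt_expPoly (α b : ℝ) (d : ℕ → ℝ) (n : ℕ) (s : ℝ) :
    HasDerivAt (expPoly α b d n) (expPoly (α * b) b (fun j => d (j + 1)) (n - 1) s) s := by
  have hexp : HasDerivAt (fun s => α * exp (s * b)) (α * b * exp (s * b)) s := by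
    refine (((hasDerivAt_mul_const b).exp).const_mul α).congr_deriv ?_
    ring
  exact hexp.add (hasDerivAt_sum_range_mul_pow_div_factorial d n s)

theorem expPoly_pos (hα : 0 < α) (hd : ∀ j, 0 ≤ d j) {s : ℝ} (hs : 0 ≤ s) :
    0 < expPoly α b d n s :=
  add_pos_of_pos_of_nonneg (by positivity) (sum_nonneg fun j _ => by have := hd j; positivity)

theorem expPolyCoeff_succ (α b : ℝ) (d : ℕ → ℝ) (j : ℕ) :
    expPolyCoeff (α * b) b (fun i => d (i + 1)) j = expPolyCoeff α b d (j + 1) := by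
  simp only [expPolyCoeff, pow_succ]
  ring

theorem hasSum_expPoly (hd₀ : ∀ j, n ≤ j → d j = 0) (s : ℝ) :
    HasSum (fun j => expPolyCoeff α b d j * s ^ j / j !) (expPoly α b d n s) := by
  have hpoly : HasSum (fun j => d j * s ^ j / j !) (∑ j ∈ range n, d j * s ^ j / j !) :=
    hasSum_sum_of_ne_finset_zero fun j hj => by simp [hd₀ j (by simpa using hj)]
  have hexp : HasSum (fun j => α * ((s * b) ^ j / j !)) (α * exp (s * b)) := by
    rw [exp_eq_exp_ℝ]
    exact (NormedSpace.expSeries_div_hasSum_exp (s * b)).mul_left α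
  unfold expPoly
  convert hexp.add hpoly using 2 with j
  simp only [expPolyCoeff, mul_pow]
  ring

theorem sq_expPoly_le_mul (hα : 0 ≤ α) (hb : 0 ≤ b) (hd : ∀ j, 0 ≤ d j)
    (hd₀ : ∀ j, n ≤ j → d j = 0)
    (hlc : ∀ j, expPolyCoeff α b d (j + 1) ^ 2 ≤
      expPolyCoeff α b d j * expPolyCoeff α b d (j + 2)) {s : ℝ} (hs : 0 ≤ s) :
    expPoly (α * b) b (fun j => d (j + 1)) (n - 1) s ^ 2 ≤
      expPoly α b d n s * expPoly (α * b * b) b (fun j => d (j + 1 + 1)) (n - 1 - 1) s := by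
  have h₀ := hasSum_expPoly (α := α) (b := b) hd₀ s
  have h₁ := hasSum_expPoly (α := α * b) (b := b) (d := fun j => d (j + 1)) (n := n - 1)
    (fun j hj => hd₀ _ (by omega)) s
  have h₂ := hasSum_expPoly (α := α * b * b) (b := b) (d := fun j => d (j + 1 + 1))
    (n := n - 1 - 1) (fun j hj => hd₀ _ (by omega)) s
  simp only [expPolyCoeff_succ (α * b) b (fun i => d (i + 1)), expPolyCoeff_succ] at h₁ h₂
  have hcoeff (j : ℕ) : 0 ≤ expPolyCoeff α b d j := by
    have := hd j
    unfold expPolyCoeff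
    positivity
  refine sq_le_mul_of_hasSum h₁ h₀ h₂ (fun j => by have := hcoeff j; positivity)
    (fun j => by have := hcoeff (j + 2); positivity) fun j => ?_
  calc (expPolyCoeff α b d (j + 1) * s ^ j / j !) ^ 2
      = expPolyCoeff α b d (j + 1) ^ 2 * (s ^ j / j !) ^ 2 := by ring
    _ ≤ expPolyCoeff α b d j * expPolyCoeff α b d (j + 2) * (s ^ j / j !) ^ 2 := by
      gcongr; exact hlc j
    _ = _ := by ring

theorem convexOn_log_expPoly (hα : 0 < α) (hb : 0 ≤ b) (hd : ∀ j, 0 ≤ d j)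
    (hd₀ : ∀ j, n ≤ j → d j = 0)
    (hlc : ∀ j, expPolyCoeff α b d (j + 1) ^ 2 ≤
      expPolyCoeff α b d j * expPolyCoeff α b d (j + 2)) :
    ConvexOn ℝ (Set.Ioi 0) fun s => log (expPoly α b d n s) :=
  convexOn_log_of_sq_deriv_le (convex_Ioi 0) isOpen_Ioi
    (fun s _ => hasDerivAt_expPoly α b d n s) (fun s _ => hasDerivAt_expPoly _ b _ _ s)
    (fun _ hs => expPoly_pos hα hd (le_of_lt hs))
    (fun _ hs => sq_expPoly_le_mul hα.le hb hd hd₀ hlc (le_of_lt hs))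

theorem deriv_expPoly_pos_and_convexOn_log (hα : 0 < α) (hb : 0 < b) (hd : ∀ j, 0 ≤ d j)
    (hd₀ : ∀ j, n ≤ j → d j = 0)
    (hlc : ∀ j, expPolyCoeff α b d (j + 1) ^ 2 ≤
      expPolyCoeff α b d j * expPolyCoeff α b d (j + 2)) :
    (∀ s ∈ Set.Ioi (0 : ℝ), 0 < deriv (expPoly α b d n) s) ∧
      ConvexOn ℝ (Set.Ioi 0) fun s => log (deriv (expPoly α b d n) s) := by
  simp only [fun s => (hasDerivAt_expPoly α b d n s).deriv]
  refine ⟨fun s hs => expPoly_pos (mul_pos hα hb) (fun j => hd _) (le_of_lt hs),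
    convexOn_log_expPoly (mul_pos hα hb) hb.le (fun j => hd _) (fun j hj => hd₀ _ (by omega))
      fun j => ?_⟩
  simpa only [expPolyCoeff_succ] using hlc (j + 1)

end ExpPoly

section Moments

variable {Ω : Type*} [MeasurableSpace Ω] {P : Measure Ω} {X : Ω → ℝ}

theorem integrable_pow_of_ae_mem_Icc [IsFiniteMeasure P] (hX : AEStronglyMeasurable X P)
    {b : ℝ} (hXb : ∀ᵐ ω ∂P, X ω ∈ Set.Icc 0 b) (j : ℕ) : Integrable (X ^ j) P := by
  refine .of_bound (hX.pow j) (b ^ j) ?_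
  filter_upwards [hXb] with ω hω
  rw [Pi.pow_apply, norm_pow, Real.norm_of_nonneg hω.1]
  exact pow_le_pow_left₀ hω.1 hω.2 j

theorem moment_succ_le_mul {b : ℝ} (hXb : ∀ᵐ ω ∂P, X ω ∈ Set.Icc 0 b) {j : ℕ}
    (hj : Integrable (X ^ j) P) (hj₁ : Integrable (X ^ (j + 1)) P) :
    moment X (j + 1) P ≤ b * moment X j P := by
  rw [moment, moment, ← integral_const_mul]
  refine integral_mono_ae hj₁ (hj.const_mul b) ?_
  filter_upwards [hXb] with ω hω
  simp only [Pi.pow_apply, pow_succ']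
  exact mul_le_mul_of_nonneg_right hω.2 (pow_nonneg hω.1 j)

theorem moment_sq_le_mul (hX : 0 ≤ᵐ[P] X) {k : ℕ} (hk : Integrable (X ^ k) P)
    (hk₁ : Integrable (X ^ (k + 1)) P) (hk₂ : Integrable (X ^ (k + 2)) P) :
    moment X (k + 1) P ^ 2 ≤ moment X k P * moment X (k + 2) P := by
  have hquad (t : ℝ) : 0 ≤ moment X k P * (t * t) + (-2 * moment X (k + 1) P) * t
      + moment X (k + 2) P := by
    have h : 0 ≤ ∫ ω, X ω ^ k * (t - X ω) ^ 2 ∂P :=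
      integral_nonneg_of_ae <| hX.mono fun ω hω => by have : 0 ≤ X ω := hω; positivity
    have hexpand : (fun ω => X ω ^ k * (t - X ω) ^ 2) = fun ω =>
        t * t * (X ^ k) ω + -2 * t * (X ^ (k + 1)) ω + (X ^ (k + 2)) ω := by
      ext ω
      simp only [Pi.pow_apply]
      ring
    rw [hexpand, integral_add ((hk.const_mul _).fun_add (hk₁.const_mul _)) hk₂,
      integral_add (hk.const_mul _) (hk₁.const_mul _), integral_const_mul,
      integral_const_mul] at h
    simp only [moment]
    linarith
  have := discrim_le_zero hquad
  rw [discrim] at this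
  linarith

theorem moment_pos (hX : 0 ≤ᵐ[P] X) {p : ℕ} (hp : Integrable (X ^ p) P)
    (hpos : 0 < P {ω | 0 < X ω}) : 0 < moment X p P := by
  refine (integral_pos_iff_support_of_nonneg_ae ?_ hp).2 (hpos.trans_le (measure_mono ?_))
  · filter_upwards [hX] with ω hω
    exact pow_nonneg hω p
  · intro ω hω
    exact pow_ne_zero p (ne_of_gt hω)

end Moments

noncomputable def geomTail (m : ℕ → ℝ) (b : ℝ) (p j : ℕ) : ℝ :=
  if j < p then m j else m p / b ^ p * b ^ j

section GeomTail

variable {m : ℕ → ℝ} {b : ℝ} {p : ℕ}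

theorem geomTail_of_le (hb : b ≠ 0) {j : ℕ} (hj : j ≤ p) : geomTail m b p j = m j := by
  unfold geomTail
  split_ifs with h
  · rfl
  · rw [show j = p by omega, div_mul_cancel₀ _ (pow_ne_zero p hb)]

theorem geomTail_of_ge {j : ℕ} (hj : p ≤ j) : geomTail m b p j = m p / b ^ p * b ^ j :=
  if_neg (by omega)

theorem div_pow_le_div_pow_of_succ_le_mul (hb : 0 < b) (hstep : ∀ j, m (j + 1) ≤ b * m j)
    {i j : ℕ} (hij : i ≤ j) : m j / b ^ j ≤ m i / b ^ i := by
  refine antitone_nat_of_succ_le (f := fun k => m k / b ^ k) (fun k => ?_) hij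
  rw [div_le_div_iff₀ (by positivity) (by positivity), pow_succ]
  nlinarith [hstep k, pow_pos hb k]

theorem mul_pow_le_geomTail (hb : 0 < b) (hstep : ∀ j, m (j + 1) ≤ b * m j) (j : ℕ) :
    m p / b ^ p * b ^ j ≤ geomTail m b p j := by
  rcases lt_or_ge j p with hj | hj
  · rw [geomTail_of_le hb.ne' hj.le, ← le_div_iff₀ (by positivity)]
    exact div_pow_le_div_pow_of_succ_le_mul hb hstep hj.le
  · rw [geomTail_of_ge hj]

theorem geomTail_sq_le_mul (hb : 0 < b) (hm₀ : ∀ j, 0 ≤ m j)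
    (hlc : ∀ j, m (j + 1) ^ 2 ≤ m j * m (j + 2)) (hstep : ∀ j, m (j + 1) ≤ b * m j)
    (j : ℕ) :
    geomTail m b p (j + 1) ^ 2 ≤ geomTail m b p j * geomTail m b p (j + 2) := by
  rcases le_or_gt (j + 2) p with hj | hj
  · simp only [geomTail_of_le hb.ne', hj, show j + 1 ≤ p by omega, show j ≤ p by omega]
    exact hlc j
  rcases le_or_gt p j with hj' | hj'
  · simp only [geomTail_of_ge, hj', show p ≤ j + 1 by omega, show p ≤ j + 2 by omega]
    exact le_of_eq (by ring)
  obtain rfl : p = j + 1 := by omega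
  have htail : m (j + 1) / b ^ (j + 1) * b ^ (j + 2) = m (j + 1) * b := by
    field_simp
    ring
  rw [geomTail_of_le hb.ne' le_rfl, geomTail_of_le hb.ne' (by omega), geomTail_of_ge (by omega),
    htail]
  nlinarith [hstep j, hm₀ (j + 1)]

end GeomTail

theorem T_succ (p : ℕ) (x : ℝ) : T (p + 1) x = exp x - ∑ j ∈ range p, x ^ j / j ! := by
  rw [T, Nat.add_sub_cancel]

theorem integral_sum_range_pow_div_factorial {Ω : Type*} [MeasurableSpace Ω] {P : Measure Ω}
    {X : Ω → ℝ} (hint : ∀ j, Integrable (X ^ j) P) (p : ℕ) (s : ℝ) :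
    (∫ ω, ∑ j ∈ range p, s ^ j * X ω ^ j / (j ! : ℝ) ∂P) =
      ∑ j ∈ range p, moment X j P * s ^ j / j ! := by
  have hint' (j : ℕ) : Integrable (fun ω => s ^ j * X ω ^ j / j !) P :=
    ((hint j).const_mul (s ^ j)).div_const _
  rw [integral_finsetSum _ fun j _ => hint' j]
  refine sum_congr rfl fun j _ => ?_
  rw [integral_div, integral_const_mul, moment]
  simp only [Pi.pow_apply]
  ring

theorem statement4_general {Ω : Type*} [MeasurableSpace Ω] (P : Measure Ω) [IsProbabilityMeasure P]
    (p : ℕ) (b : ℝ) (hb : 0 < b)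
    (X : Ω → ℝ) (hX : Measurable X)
    (hXb : P {ω | X ω ∈ Set.Icc 0 b} = 1)
    (hXpos : 0 < P {ω | 0 < X ω})
    (z : ℝ → ℝ)
    (hz : z = fun s =>
      (∫ ω, (X ω) ^ p ∂P) / b ^ p * T (p + 1) (s * b)
        + ∫ ω, ∑ j ∈ Finset.range p, s ^ j * (X ω) ^ j / (j.factorial : ℝ) ∂P) :
    (∀ s ∈ Set.Ioi (0 : ℝ), 0 < deriv z s) ∧
      ConvexOn ℝ (Set.Ioi (0 : ℝ)) (fun s => Real.log (deriv z s)) := by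
  have hXIcc : ∀ᵐ ω ∂P, X ω ∈ Set.Icc 0 b :=
    (ae_iff_measure_eq (hX measurableSet_Icc).nullMeasurableSet).2 (by rw [hXb, measure_univ])
  have hX₀ : 0 ≤ᵐ[P] X := hXIcc.mono fun ω hω => hω.1
  have hint := integrable_pow_of_ae_mem_Icc hX.aestronglyMeasurable hXIcc
  set m : ℕ → ℝ := fun j => moment X j P
  have hstep (j : ℕ) : m (j + 1) ≤ b * m j := moment_succ_le_mul hXIcc (hint j) (hint (j + 1))
  have hm₀ (j : ℕ) : 0 ≤ m j :=
    integral_nonneg_of_ae (hX₀.mono fun ω hω => pow_nonneg hω j)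
  set c := m p / b ^ p
  have hz' : z = expPoly c b (fun j => geomTail m b p j - c * b ^ j) p := by
    ext s
    simp only [hz, expPoly, T_succ]
    rw [integral_sum_range_pow_div_factorial hint]
    have hsum : ∑ j ∈ range p, (geomTail m b p j - c * b ^ j) * s ^ j / j ! =
        ∑ j ∈ range p, (m j * s ^ j / (j !) - c * ((s * b) ^ j / j !)) :=
      sum_congr rfl fun j hj => by
        rw [geomTail_of_le hb.ne' (mem_range.1 hj).le, mul_pow]
        ring
    rw [hsum, sum_sub_distrib, ← mul_sum]
    change m p / b ^ p * _ + _ = _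
    ring
  rw [hz']
  have hc : 0 < c := div_pos (moment_pos hX₀ (hint p) hXpos) (by positivity)
  refine deriv_expPoly_pos_and_convexOn_log hc hb
    (fun j => sub_nonneg.2 (mul_pow_le_geomTail hb hstep j))
    (fun j hj => by rw [geomTail_of_ge hj, sub_self]) fun j => ?_
  simpa only [expPolyCoeff, sub_add_cancel] using geomTail_sq_le_mul hb hm₀
    (fun k => moment_sq_le_mul hX₀ (hint k) (hint (k + 1)) (hint (k + 2))) hstep j

theorem statement4 {Ω : Type*} [MeasurableSpace Ω] (P : Measure Ω) [IsProbabilityMeasure P]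
    (p : ℕ) (hp : 1 ≤ p) (b : ℝ) (hb : 0 < b)
    (X : Ω → ℝ) (hX : Measurable X)
    (hXb : P {ω | X ω ∈ Set.Icc 0 b} = 1)
    (hXpos : 0 < P {ω | 0 < X ω})
    (z : ℝ → ℝ)
    (hz : z = fun s =>
      (∫ ω, (X ω) ^ p ∂P) / b ^ p * T (p + 1) (s * b)
        + ∫ ω, ∑ j ∈ Finset.range p, s ^ j * (X ω) ^ j / (j.factorial : ℝ) ∂P) :
    (∀ s ∈ Set.Ioi (0 : ℝ), 0 < deriv z s) ∧
      ConvexOn ℝ (Set.Ioi (0 : ℝ)) (fun s => Real.log (deriv z s)) :=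
  statement4_general P p b hb X hX hXb hXpos z hz
end

section
/- Let b > 0 and let X be a random variable with P(X ∈ [0, b]) = 1 and P(X > 0) > 0. Set μ^k := E[X^k] for every positive integer k. Then for every x ≥ 0: lim_{p → ∞} C_p(x, b, μ^1, …, μ^p) = b^{−2} · ( E[X^2 exp(xX/b)] / E[X exp(xX/b)] )^2. -/
open Real Finset MeasureTheory Filter

open scoped Topology

/-!
Dividing the numerator and the denominator of `C_p` by `b ^ (p - 2)` and `b ^ (p - 1)` turns
them into
`∑_{j < p - c} (x^j / j!) μ^{j+c} / b^j + (μ^p / b^{p-c}) (e^x - ∑_{j < p - c} x^j / j!)`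
for `c = 2, 1`. The first sum is a partial sum of `∑_j E[X^c (xX/b)^j / j!] = E[X^c e^{xX/b}]`
(dominated convergence, as `|X| ≤ b`), and the second term is at most `b^c` times the remainder
of the exponential series, hence tends to `0`. The limit of the denominator is positive because
`X > 0` with positive probability.
-/

/-- `Cp p y b μ`, where `μ k` stands for the `k`-th moment `μ^k`. -/
noncomputable def Cp (p : ℕ) (y b : ℝ) (μ : ℕ → ℝ) : ℝ :=
  ((μ p * Real.exp y
      + ∑ j ∈ Finset.range (p - 2), y ^ j / (j.factorial : ℝ) * (b ^ (p - j - 2) * μ (j + 2) - μ p)) /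
   (μ p * Real.exp y
      + ∑ j ∈ Finset.range (p - 1), y ^ j / (j.factorial : ℝ) * (b ^ (p - j - 1) * μ (j + 1) - μ p))) ^ 2

/-- `Cp`'s numerator (`c = 2`) and denominator (`c = 1`), divided by `b ^ (p - c)`. -/
noncomputable def Cp.scaledTerm (c p : ℕ) (y b : ℝ) (μ : ℕ → ℝ) : ℝ :=
  ∑ j ∈ range (p - c), y ^ j / (j.factorial : ℝ) * (μ (j + c) / b ^ j)
    + μ p / b ^ (p - c) * (exp y - ∑ j ∈ range (p - c), y ^ j / (j.factorial : ℝ))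

lemma Real.hasSum_pow_div_factorial (y : ℝ) :
    HasSum (fun n : ℕ => y ^ n / (n.factorial : ℝ)) (exp y) := by
  rw [Real.exp_eq_exp_ℝ]
  exact NormedSpace.expSeries_div_hasSum_exp y

lemma Cp.pow_mul_scaledTerm {b : ℝ} (hb : b ≠ 0) (c p : ℕ) (y : ℝ) (μ : ℕ → ℝ) :
    b ^ (p - c) * Cp.scaledTerm c p y b μ =
      μ p * exp y + ∑ j ∈ range (p - c),
        y ^ j / (j.factorial : ℝ) * (b ^ (p - j - c) * μ (j + c) - μ p) := by
  have hterm : ∀ j ∈ range (p - c),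
      b ^ (p - c) * (y ^ j / (j.factorial : ℝ) * (μ (j + c) / b ^ j))
        = y ^ j / (j.factorial : ℝ) * (b ^ (p - j - c) * μ (j + c)) := by
    intro j hj
    rw [show p - c = p - j - c + j by have := mem_range.mp hj; omega, pow_add]
    field_simp
  rw [Cp.scaledTerm, mul_add, mul_sum, sum_congr rfl hterm, ← mul_assoc,
    mul_div_cancel₀ _ (pow_ne_zero _ hb)]
  simp only [mul_sub, sum_sub_distrib, ← sum_mul]
  ring

lemma Cp_eq_sq_scaledTerm_div {b : ℝ} (hb : b ≠ 0) {p : ℕ} (hp : 2 ≤ p) (y : ℝ) (μ : ℕ → ℝ) :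
    Cp p y b μ = (Cp.scaledTerm 2 p y b μ / (b * Cp.scaledTerm 1 p y b μ)) ^ 2 := by
  have hpow : b ^ (p - 1) = b ^ (p - 2) * b := by
    rw [← pow_succ]
    congr 1
    omega
  rw [Cp, ← Cp.pow_mul_scaledTerm hb 2, ← Cp.pow_mul_scaledTerm hb 1, hpow, mul_assoc,
    mul_div_mul_left _ _ (pow_ne_zero _ hb)]

section Moments

variable {Ω : Type*} [MeasurableSpace Ω] {P : Measure Ω} {X : Ω → ℝ} {b : ℝ}

lemma integrable_comp_of_ae_abs_le [IsFiniteMeasure P] (hX : AEMeasurable X P)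
    (hXb : ∀ᵐ ω ∂P, |X ω| ≤ b) {g : ℝ → ℝ} (hg : Continuous g) :
    Integrable (fun ω => g (X ω)) P := by
  obtain ⟨C, hC⟩ :=
    (isCompact_Icc (a := -b) (b := b)).exists_bound_of_continuousOn hg.continuousOn
  exact .of_bound (hg.measurable.comp_aemeasurable hX).aestronglyMeasurable C
    (hXb.mono fun ω hω => hC _ (abs_le.mp hω))

lemma abs_integral_pow_le [IsProbabilityMeasure P] (hXb : ∀ᵐ ω ∂P, |X ω| ≤ b) (k : ℕ) :
    |∫ ω, X ω ^ k ∂P| ≤ b ^ k := by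
  simpa using norm_integral_le_of_norm_le_const (μ := P) (f := fun ω => X ω ^ k)
    (hXb.mono fun ω hω => by simpa using pow_le_pow_left₀ (abs_nonneg _) hω k)

lemma hasSum_integral_pow_mul_exp [IsFiniteMeasure P] (hX : AEMeasurable X P) (hb : 0 < b)
    (hXb : ∀ᵐ ω ∂P, |X ω| ≤ b) (c : ℕ) (y : ℝ) :
    HasSum (fun j : ℕ => y ^ j / (j.factorial : ℝ) * ((∫ ω, X ω ^ (j + c) ∂P) / b ^ j))
      (∫ ω, X ω ^ c * exp (y * X ω / b) ∂P) := by
  have hterm : ∀ j : ℕ, y ^ j / (j.factorial : ℝ) * ((∫ ω, X ω ^ (j + c) ∂P) / b ^ j)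
      = ∫ ω, X ω ^ c * ((y * X ω / b) ^ j / (j.factorial : ℝ)) ∂P := by
    intro j
    rw [← integral_div, ← integral_const_mul]
    congr 1
    ext ω
    ring
  simp_rw [hterm]
  refine hasSum_integral_of_dominated_convergence
    (fun j _ => b ^ c * (|y| ^ j / (j.factorial : ℝ)))
    (fun j => (by fun_prop : AEMeasurable _ P).aestronglyMeasurable)
    (fun j => ?_) (ae_of_all _ fun _ => (Real.summable_pow_div_factorial |y|).mul_left _)
    (integrable_const _)
    (ae_of_all _ fun ω => (Real.hasSum_pow_div_factorial _).mul_left _)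
  filter_upwards [hXb] with ω hω
  simp only [norm_mul, norm_div, norm_pow, Real.norm_eq_abs, Nat.abs_cast, abs_of_pos hb]
  have hratio : |y| * |X ω| / b ≤ |y| := by
    rw [div_le_iff₀ hb]
    exact mul_le_mul_of_nonneg_left hω (abs_nonneg y)
  gcongr

lemma tendsto_scaledTerm [IsProbabilityMeasure P] (hX : AEMeasurable X P) (hb : 0 < b)
    (hXb : ∀ᵐ ω ∂P, |X ω| ≤ b) (c : ℕ) (y : ℝ) :
    Tendsto (fun p => Cp.scaledTerm c p y b (fun k => ∫ ω, X ω ^ k ∂P)) atTop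
      (𝓝 (∫ ω, X ω ^ c * exp (y * X ω / b) ∂P)) := by
  have hremainder : Tendsto (fun n => exp y - ∑ j ∈ range n, y ^ j / (j.factorial : ℝ))
      atTop (𝓝 0) := by
    simpa using (Real.hasSum_pow_div_factorial y).tendsto_sum_nat.const_sub (exp y)
  have htail : Tendsto (fun p => (∫ ω, X ω ^ p ∂P) / b ^ (p - c)
      * (exp y - ∑ j ∈ range (p - c), y ^ j / (j.factorial : ℝ))) atTop (𝓝 0) := by
    refine squeeze_zero_norm' ?_
      (by simpa using (hremainder.comp (tendsto_sub_atTop_nat c)).abs.const_mul (b ^ c))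
    filter_upwards [eventually_ge_atTop c] with p hp
    rw [norm_mul, norm_div, Real.norm_eq_abs, Real.norm_eq_abs, Real.norm_eq_abs,
      abs_of_pos (pow_pos hb _)]
    gcongr
    rw [div_le_iff₀ (pow_pos hb _), ← pow_add, Nat.add_sub_cancel' hp]
    exact abs_integral_pow_le hXb p
  simpa only [Cp.scaledTerm, add_zero, Function.comp_def] using
    ((hasSum_integral_pow_mul_exp hX hb hXb c y).tendsto_sum_nat.comp
      (tendsto_sub_atTop_nat c)).add htail

lemma integral_mul_exp_pos (hX0 : 0 ≤ᵐ[P] X) (hXpos : 0 < P {ω | 0 < X ω}) {f : Ω → ℝ}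
    (hint : Integrable (fun ω => X ω * exp (f ω)) P) :
    0 < ∫ ω, X ω * exp (f ω) ∂P := by
  rw [integral_pos_iff_support_of_nonneg_ae
    (hX0.mono fun ω hω => mul_nonneg hω (exp_pos _).le) hint]
  exact hXpos.trans_le (measure_mono fun ω hω => mul_ne_zero (ne_of_gt hω) (exp_pos _).ne')

end Moments

theorem statement10_general {Ω : Type*} [MeasurableSpace Ω] (P : Measure Ω) [IsProbabilityMeasure P]
    (b : ℝ) (hb : 0 < b)
    (X : Ω → ℝ) (hX : Measurable X)
    (hXb : P {ω | X ω ∈ Set.Icc 0 b} = 1)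
    (hXpos : 0 < P {ω | 0 < X ω})
    (x : ℝ) :
    Tendsto (fun p : ℕ => Cp p x b (fun k => ∫ ω, (X ω) ^ k ∂P)) atTop
      (nhds ((1 / b ^ 2) *
        ((∫ ω, (X ω) ^ 2 * Real.exp (x * X ω / b) ∂P) /
          (∫ ω, X ω * Real.exp (x * X ω / b) ∂P)) ^ 2)) := by
  have hXIcc : ∀ᵐ ω ∂P, X ω ∈ Set.Icc 0 b :=
    (ae_iff_measure_eq (hX measurableSet_Icc).nullMeasurableSet).mpr (by rw [hXb, measure_univ])
  have hXabs : ∀ᵐ ω ∂P, |X ω| ≤ b :=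
    hXIcc.mono fun ω hω => abs_le.mpr ⟨by linarith [hω.1], hω.2⟩
  have hden : 0 < ∫ ω, X ω * exp (x * X ω / b) ∂P :=
    integral_mul_exp_pos (hXIcc.mono fun ω hω => hω.1) hXpos
      (integrable_comp_of_ae_abs_le hX.aemeasurable hXabs
        (by fun_prop : Continuous fun t => t * exp (x * t / b)))
  have hnum := tendsto_scaledTerm hX.aemeasurable hb hXabs 2 x
  have hdenom := tendsto_scaledTerm hX.aemeasurable hb hXabs 1 x
  simp only [pow_one] at hdenom
  have hlimit : ∀ A B : ℝ, 1 / b ^ 2 * (A / B) ^ 2 = (A / (b * B)) ^ 2 := fun A B => by ring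
  rw [hlimit]
  refine ((hnum.div (hdenom.const_mul b) (mul_pos hb hden).ne').pow 2).congr' ?_
  filter_upwards [eventually_ge_atTop 2] with p hp
  exact (Cp_eq_sq_scaledTerm_div hb.ne' hp x _).symm

theorem statement10 {Ω : Type*} [MeasurableSpace Ω] (P : Measure Ω) [IsProbabilityMeasure P]
    (b : ℝ) (hb : 0 < b)
    (X : Ω → ℝ) (hX : Measurable X)
    (hXb : P {ω | X ω ∈ Set.Icc 0 b} = 1)
    (hXpos : 0 < P {ω | 0 < X ω})
    (x : ℝ) (hx : 0 ≤ x) :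
    Tendsto (fun p : ℕ => Cp p x b (fun k => ∫ ω, (X ω) ^ k ∂P)) atTop
      (nhds ((1 / b ^ 2) *
        ((∫ ω, (X ω) ^ 2 * Real.exp (x * X ω / b) ∂P) /
          (∫ ω, X ω * Real.exp (x * X ω / b) ∂P)) ^ 2)) :=
  statement10_general P b hb X hX hXb hXpos x
end

section
/- Let X_1, …, X_n be independent random variables with P(X_i ∈ [0, b_i]) = 1, b_i > 0 and P(X_i > 0) > 0 for each i. Let S_n = ∑_{i=1}^n X_i and D_n := ∑_{j=1}^n (E[X_j^2] / E[X_j])^2. Then for all t > 0: P(S_n − E[S_n] ≥ t) ≤ exp( −2t^2 / ∑_{i=1}^n ( E[X_i^2 exp(4tX_i/D_n)] / E[X_i exp(4tX_i/D_n)] )^2 ). -/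
/-!
For `0 ≤ X ≤ b`, the ratio `r(u) = E[X² e^{uX}] / E[X e^{uX}]` is nondecreasing in `u`: this is a
correlation inequality, obtained by integrating a pointwise rearrangement inequality against two
independent copies of `X`. If `r ≤ c` on `[0, λ]`, then on that interval the second derivative of the
cumulant generating function, the variance `E_u[X²] - m²` of `X` under the tilt `e^{uX}` with tilted
mean `m`, is at most `c m - m² ≤ c² / 4`, so Taylor's formula gives
`log E e^{λX} ≤ λ E X + λ² c² / 8`. With `c_i = r_i(4t/D)` and `C = Σ c_i²`, monotonicity gives
`D ≤ C`, hence `λ = 4t/C ≤ 4t/D`, and the Chernoff bound at this `λ` is `exp(-2t²/C)`.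
-/

open Real Finset MeasureTheory ProbabilityTheory

lemma integral_mul_integral_le_of_ae_prod {Ω : Type*} [MeasurableSpace Ω] {μ : Measure Ω}
    [SFinite μ] {f g f' g' : Ω → ℝ}
    (hf : Integrable f μ) (hg : Integrable g μ) (hf' : Integrable f' μ) (hg' : Integrable g' μ)
    (h : ∀ᵐ z ∂μ.prod μ,
      f z.1 * g z.2 + g z.1 * f z.2 ≤ f' z.1 * g' z.2 + g' z.1 * f' z.2) :
    (∫ ω, f ω ∂μ) * ∫ ω, g ω ∂μ ≤ (∫ ω, f' ω ∂μ) * ∫ ω, g' ω ∂μ := by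
  have key := integral_mono_ae ((hf.mul_prod hg).add (hg.mul_prod hf))
    ((hf'.mul_prod hg').add (hg'.mul_prod hf')) h
  rw [integral_add' (hf.mul_prod hg) (hg.mul_prod hf),
    integral_add' (hf'.mul_prod hg') (hg'.mul_prod hf')] at key
  simp only [integral_prod_mul] at key
  linarith

lemma pow_mul_exp_rearrangement {x y u v : ℝ} (hx : 0 ≤ x) (hy : 0 ≤ y) (huv : u ≤ v) (k : ℕ) :
    x ^ (k + 1) * exp (u * x) * (y ^ k * exp (v * y)) +
        x ^ k * exp (v * x) * (y ^ (k + 1) * exp (u * y)) ≤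
      x ^ (k + 1) * exp (v * x) * (y ^ k * exp (u * y)) +
        x ^ k * exp (u * x) * (y ^ (k + 1) * exp (v * y)) := by
  have hsign : 0 ≤ (x - y) * (exp (v * x) * exp (u * y) - exp (u * x) * exp (v * y)) := by
    rw [← exp_add, ← exp_add]
    rcases le_total y x with h | h
    · exact mul_nonneg (sub_nonneg.2 h) (sub_nonneg.2 (exp_le_exp.2 (by nlinarith)))
    · exact mul_nonneg_of_nonpos_of_nonpos (sub_nonpos.2 h)
        (sub_nonpos.2 (exp_le_exp.2 (by nlinarith)))
  linear_combination mul_nonneg (mul_nonneg (pow_nonneg hx k) (pow_nonneg hy k)) hsign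

section TiltedMoments

variable {Ω : Type*} [MeasurableSpace Ω] {μ : Measure Ω} {X : Ω → ℝ} {b : ℝ}

noncomputable def momentRatio (μ : Measure Ω) (X : Ω → ℝ) (u : ℝ) : ℝ :=
  μ[fun ω ↦ X ω ^ 2 * exp (u * X ω)] / μ[fun ω ↦ X ω * exp (u * X ω)]

lemma integral_mul_exp_nonneg (hX : ∀ᵐ ω ∂μ, 0 ≤ X ω) (u : ℝ) :
    0 ≤ μ[fun ω ↦ X ω * exp (u * X ω)] :=
  integral_nonneg_of_ae (by filter_upwards [hX] with ω hω using mul_nonneg hω (exp_pos _).le)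

lemma momentRatio_nonneg (hX : ∀ᵐ ω ∂μ, 0 ≤ X ω) (u : ℝ) : 0 ≤ momentRatio μ X u :=
  div_nonneg (integral_nonneg fun _ ↦ by positivity) (integral_mul_exp_nonneg hX u)

section FiniteMeasure

variable [IsFiniteMeasure μ]

lemma mem_interior_integrableExpSet_of_mem_Icc {a : ℝ} (hm : AEMeasurable X μ)
    (hb : ∀ᵐ ω ∂μ, X ω ∈ Set.Icc a b) (u : ℝ) : u ∈ interior (integrableExpSet X μ) := by
  have : integrableExpSet X μ = Set.univ :=
    Set.eq_univ_of_forall fun _ ↦ integrable_exp_mul_of_mem_Icc hm hb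
  simp [this]

lemma integral_pow_succ_mul_exp_mul_le (hm : AEMeasurable X μ)
    (hb : ∀ᵐ ω ∂μ, X ω ∈ Set.Icc 0 b) {u v : ℝ} (huv : u ≤ v) (k : ℕ) :
    μ[fun ω ↦ X ω ^ (k + 1) * exp (u * X ω)] * μ[fun ω ↦ X ω ^ k * exp (v * X ω)] ≤
      μ[fun ω ↦ X ω ^ (k + 1) * exp (v * X ω)] * μ[fun ω ↦ X ω ^ k * exp (u * X ω)] := by
  have hint (j : ℕ) (w : ℝ) := integrable_pow_mul_exp_of_mem_interior_integrableExpSet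
    (mem_interior_integrableExpSet_of_mem_Icc hm hb w) j
  refine integral_mul_integral_le_of_ae_prod (hint _ _) (hint _ _) (hint _ _) (hint _ _) ?_
  filter_upwards [Measure.quasiMeasurePreserving_fst.ae hb,
    Measure.quasiMeasurePreserving_snd.ae hb] with z hx hy
  exact pow_mul_exp_rearrangement hx.1 hy.1 huv k

lemma ae_eq_zero_of_integral_mul_exp_eq_zero (hm : AEMeasurable X μ)
    (hb : ∀ᵐ ω ∂μ, X ω ∈ Set.Icc 0 b) {v : ℝ}
    (h : μ[fun ω ↦ X ω * exp (v * X ω)] = 0) : X =ᵐ[μ] 0 := by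
  have hint : Integrable (fun ω ↦ X ω * exp (v * X ω)) μ := by
    simpa using integrable_pow_mul_exp_of_mem_interior_integrableExpSet
      (mem_interior_integrableExpSet_of_mem_Icc hm hb v) 1
  have hnonneg : 0 ≤ᵐ[μ] fun ω ↦ X ω * exp (v * X ω) := by
    filter_upwards [hb] with ω hω using mul_nonneg hω.1 (exp_pos _).le
  filter_upwards [(integral_eq_zero_iff_of_nonneg_ae hnonneg hint).1 h] with ω hω
  simpa [exp_ne_zero] using hω

lemma integral_sq_mul_exp_le_momentRatio_mul (hm : AEMeasurable X μ)
    (hb : ∀ᵐ ω ∂μ, X ω ∈ Set.Icc 0 b) {u v : ℝ} (huv : u ≤ v) :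
    μ[fun ω ↦ X ω ^ 2 * exp (u * X ω)] ≤ momentRatio μ X v * μ[fun ω ↦ X ω * exp (u * X ω)] := by
  rcases (integral_mul_exp_nonneg (hb.mono fun _ h ↦ h.1) v).eq_or_lt with h0 | hpos
  · have hX := ae_eq_zero_of_integral_mul_exp_eq_zero hm hb h0.symm
    rw [integral_eq_zero_of_ae (by filter_upwards [hX] with ω hω; simp [hω])]
    simp [momentRatio, ← h0]
  · rw [momentRatio, div_mul_eq_mul_div, le_div_iff₀ hpos]
    simpa using integral_pow_succ_mul_exp_mul_le hm hb huv 1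

lemma momentRatio_mono (hm : AEMeasurable X μ) (hb : ∀ᵐ ω ∂μ, X ω ∈ Set.Icc 0 b) :
    Monotone (momentRatio μ X) := fun _ _ huv ↦
  div_le_of_le_mul₀ (integral_mul_exp_nonneg (hb.mono fun _ h ↦ h.1) _)
    (momentRatio_nonneg (hb.mono fun _ h ↦ h.1) _)
    (integral_sq_mul_exp_le_momentRatio_mul hm hb huv)

end FiniteMeasure

variable [IsProbabilityMeasure μ]

lemma cgf_le_of_iteratedDeriv_two_cgf_le {t K : ℝ} (ht : 0 ≤ t)
    (hs : Set.Icc 0 t ⊆ interior (integrableExpSet X μ))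
    (hK : ∀ u ∈ Set.Icc 0 t, iteratedDeriv 2 (cgf X μ) u ≤ K) :
    cgf X μ t ≤ t * μ[X] + K * t ^ 2 / 2 := by
  rcases ht.eq_or_lt with rfl | ht
  · simp
  have h0 : (0 : ℝ) ∈ Set.Icc 0 t := Set.left_mem_Icc.2 ht.le
  have hderiv : derivWithin (cgf X μ) (Set.Icc 0 t) 0 = μ[X] := by
    rw [(analyticAt_cgf (hs h0)).differentiableAt.derivWithin (uniqueDiffOn_Icc ht 0 h0),
      deriv_cgf_zero (hs h0)]
    simp
  obtain ⟨u, hu, htaylor⟩ := taylor_mean_remainder_lagrange_iteratedDeriv (n := 1) ht.ne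
    (by rw [Set.uIcc_of_lt ht]; exact (analyticOn_cgf.mono hs).contDiffOn (uniqueDiffOn_Icc ht))
  have hcgf : cgf X μ t - t * μ[X] = iteratedDeriv 2 (cgf X μ) u * t ^ 2 / 2 := by
    simpa [Set.uIcc_of_lt ht, hderiv] using htaylor
  rw [Set.uIoo_of_lt ht] at hu
  have := mul_le_mul_of_nonneg_right (hK u (Set.Ioo_subset_Icc_self hu)) (sq_nonneg t)
  linarith

lemma iteratedDeriv_two_cgf_le_of_integral_sq_mul_exp_le {u c : ℝ}
    (hu : u ∈ interior (integrableExpSet X μ))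
    (h : μ[fun ω ↦ X ω ^ 2 * exp (u * X ω)] ≤ c * μ[fun ω ↦ X ω * exp (u * X ω)]) :
    iteratedDeriv 2 (cgf X μ) u ≤ c ^ 2 / 4 := by
  have hmgf : 0 < mgf X μ u := mgf_pos (interior_subset (s := integrableExpSet X μ) hu)
  rw [iteratedDeriv_two_cgf hu, deriv_cgf hu]
  have : μ[fun ω ↦ X ω ^ 2 * exp (u * X ω)] / mgf X μ u
      ≤ c * (μ[fun ω ↦ X ω * exp (u * X ω)] / mgf X μ u) := by
    rw [← mul_div_assoc]
    exact div_le_div_of_nonneg_right h hmgf.le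
  nlinarith [sq_nonneg (c / 2 - μ[fun ω ↦ X ω * exp (u * X ω)] / mgf X μ u)]

lemma cgf_le_of_le_momentRatio (hm : AEMeasurable X μ) (hb : ∀ᵐ ω ∂μ, X ω ∈ Set.Icc 0 b)
    {l v : ℝ} (hl : 0 ≤ l) (hlv : l ≤ v) :
    cgf X μ l ≤ l * μ[X] + l ^ 2 * momentRatio μ X v ^ 2 / 8 := by
  have hmem := mem_interior_integrableExpSet_of_mem_Icc hm hb
  calc cgf X μ l ≤ l * μ[X] + momentRatio μ X v ^ 2 / 4 * l ^ 2 / 2 :=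
        cgf_le_of_iteratedDeriv_two_cgf_le hl (fun u _ ↦ hmem u) fun u hu ↦
          iteratedDeriv_two_cgf_le_of_integral_sq_mul_exp_le (hmem u)
            (integral_sq_mul_exp_le_momentRatio_mul hm hb (hu.2.trans hlv))
    _ = l * μ[X] + l ^ 2 * momentRatio μ X v ^ 2 / 8 := by ring

end TiltedMoments

section Concentration

variable {Ω ι : Type*} [MeasurableSpace Ω] {μ : Measure Ω} [IsProbabilityMeasure μ] [Fintype ι]
  {X : ι → Ω → ℝ}

lemma measureReal_sum_sub_integral_ge_le (hindep : iIndepFun X μ) (hX : ∀ i, Measurable (X i))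
    (hint : ∀ i, Integrable (X i) μ) {l : ℝ} (hl : 0 ≤ l)
    (hexp : ∀ i, Integrable (fun ω ↦ exp (l * X i ω)) μ) {K : ι → ℝ}
    (hK : ∀ i, cgf (X i) μ l ≤ l * μ[X i] + K i) (t : ℝ) :
    μ.real {ω | t ≤ ∑ i, X i ω - ∫ ω', ∑ i, X i ω' ∂μ} ≤ exp (-l * t + ∑ i, K i) := by
  have hmean : ∫ ω, ∑ i, X i ω ∂μ = ∑ i, μ[X i] := integral_finsetSum _ fun i _ ↦ hint i
  have hset : {ω | t ≤ ∑ i, X i ω - ∫ ω', ∑ i, X i ω' ∂μ} =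
      {ω | t + ∑ i, μ[X i] ≤ (∑ i, X i) ω} := by
    ext ω
    simp [hmean, le_sub_iff_add_le]
  have hK_sum := Finset.sum_le_sum fun i (_ : i ∈ Finset.univ) ↦ hK i
  rw [Finset.sum_add_distrib, ← Finset.mul_sum] at hK_sum
  calc μ.real {ω | t ≤ ∑ i, X i ω - ∫ ω', ∑ i, X i ω' ∂μ}
      ≤ exp (-l * (t + ∑ i, μ[X i]) + cgf (∑ i, X i) μ l) := by
        rw [hset]
        exact measure_ge_le_exp_cgf _ hl (hindep.integrable_exp_mul_sum hX fun i _ ↦ hexp i)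
    _ ≤ exp (-l * t + ∑ i, K i) := by
        rw [hindep.cgf_sum hX fun i _ ↦ hexp i]
        exact exp_le_exp.2 (by linarith)

lemma measureReal_sum_sub_integral_ge_le_exp_momentRatio {b : ι → ℝ} (hindep : iIndepFun X μ)
    (hX : ∀ i, Measurable (X i)) (hb : ∀ i, ∀ᵐ ω ∂μ, X i ω ∈ Set.Icc 0 (b i))
    {t : ℝ} (ht : 0 < t) :
    μ.real {ω | t ≤ ∑ i, X i ω - ∫ ω', ∑ i, X i ω' ∂μ} ≤
      exp (-2 * t ^ 2 /
        ∑ i, momentRatio μ (X i) (4 * t / ∑ j, momentRatio μ (X j) 0 ^ 2) ^ 2) := by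
  set D := ∑ j, momentRatio μ (X j) 0 ^ 2
  set C := ∑ i, momentRatio μ (X i) (4 * t / D) ^ 2 with hC
  have hDC : D ≤ C := Finset.sum_le_sum fun i _ ↦
    pow_le_pow_left₀ (momentRatio_nonneg ((hb i).mono fun _ h ↦ h.1) 0)
      (momentRatio_mono (hX i).aemeasurable (hb i) (by positivity)) 2
  have hD_nonneg : 0 ≤ D := Finset.sum_nonneg fun j _ ↦ sq_nonneg _
  rcases hD_nonneg.eq_or_lt with hD0 | hDpos
  · -- `4 * t / 0 = 0`, so `C = D = 0` and the bound is `exp 0 = 1`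
    have hC0 : C = 0 := by rw [hC, ← hD0, div_zero]; exact hD0.symm
    rw [hC0, div_zero, exp_zero]
    exact measureReal_le_one
  have hCpos : 0 < C := hDpos.trans_le hDC
  have hl : 4 * t / C ≤ 4 * t / D := div_le_div_of_nonneg_left (by positivity) hDpos hDC
  calc μ.real {ω | t ≤ ∑ i, X i ω - ∫ ω', ∑ i, X i ω' ∂μ}
      ≤ exp (-(4 * t / C) * t +
          ∑ i, (4 * t / C) ^ 2 * momentRatio μ (X i) (4 * t / D) ^ 2 / 8) :=
        measureReal_sum_sub_integral_ge_le hindep hX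
          (fun i ↦ Integrable.of_mem_Icc 0 (b i) (hX i).aemeasurable (hb i)) (by positivity)
          (fun i ↦ integrable_exp_mul_of_mem_Icc (hX i).aemeasurable (hb i))
          (fun i ↦ cgf_le_of_le_momentRatio (hX i).aemeasurable (hb i) (by positivity) hl) t
    _ = exp (-2 * t ^ 2 / C) := by
        rw [← Finset.sum_div, ← Finset.mul_sum, ← hC]
        congr 1
        field_simp
        ring

end Concentration

theorem statement11_general {Ω : Type*} [MeasurableSpace Ω] (P : Measure Ω) [IsProbabilityMeasure P]
    (n : ℕ) (X : Fin n → Ω → ℝ) (b : Fin n → ℝ)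
    (hX : ∀ i, Measurable (X i))
    (hrange : ∀ i, P {ω | X i ω ∈ Set.Icc 0 (b i)} = 1)
    (hindep : iIndepFun X P)
    (t : ℝ) (ht : 0 < t) :
    P {ω | t ≤ (∑ i, X i ω) - ∫ ω', ∑ i, X i ω' ∂P} ≤
      ENNReal.ofReal (Real.exp (-2 * t ^ 2 /
        ∑ i,
          ((∫ ω, (X i ω) ^ 2 *
              Real.exp (4 * t * X i ω / ∑ j, ((∫ ω', (X j ω') ^ 2 ∂P) / ∫ ω', X j ω' ∂P) ^ 2) ∂P) /
           (∫ ω, X i ω *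
              Real.exp (4 * t * X i ω / ∑ j, ((∫ ω', (X j ω') ^ 2 ∂P) / ∫ ω', X j ω' ∂P) ^ 2) ∂P)) ^ 2)) := by
  have hb : ∀ i, ∀ᵐ ω ∂P, X i ω ∈ Set.Icc 0 (b i) := fun i ↦
    (ae_iff_measure_eq ((hX i) measurableSet_Icc).nullMeasurableSet).2
      (by rw [hrange i, measure_univ])
  have hD : ∑ j, ((∫ ω, X j ω ^ 2 ∂P) / ∫ ω, X j ω ∂P) ^ 2 = ∑ j, momentRatio P (X j) 0 ^ 2 := by
    simp [momentRatio]
  have hratio (i : Fin n) (D : ℝ) :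
      (∫ ω, X i ω ^ 2 * exp (4 * t * X i ω / D) ∂P) / ∫ ω, X i ω * exp (4 * t * X i ω / D) ∂P =
        momentRatio P (X i) (4 * t / D) := by
    simp only [momentRatio, mul_div_right_comm]
  rw [hD]
  simp only [hratio]
  rw [← ofReal_measureReal]
  exact ENNReal.ofReal_le_ofReal
    (measureReal_sum_sub_integral_ge_le_exp_momentRatio hindep hX hb ht)

theorem statement11 {Ω : Type*} [MeasurableSpace Ω] (P : Measure Ω) [IsProbabilityMeasure P]
    (n : ℕ) (X : Fin n → Ω → ℝ) (b : Fin n → ℝ)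
    (hX : ∀ i, Measurable (X i))
    (hb : ∀ i, 0 < b i)
    (hrange : ∀ i, P {ω | X i ω ∈ Set.Icc 0 (b i)} = 1)
    (hpos : ∀ i, 0 < P {ω | 0 < X i ω})
    (hindep : iIndepFun X P)
    (t : ℝ) (ht : 0 < t) :
    P {ω | t ≤ (∑ i, X i ω) - ∫ ω', ∑ i, X i ω' ∂P} ≤
      ENNReal.ofReal (Real.exp (-2 * t ^ 2 /
        ∑ i,
          ((∫ ω, (X i ω) ^ 2 *
              Real.exp (4 * t * X i ω / ∑ j, ((∫ ω', (X j ω') ^ 2 ∂P) / ∫ ω', X j ω' ∂P) ^ 2) ∂P) /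
           (∫ ω, X i ω *
              Real.exp (4 * t * X i ω / ∑ j, ((∫ ω', (X j ω') ^ 2 ∂P) / ∫ ω', X j ω' ∂P) ^ 2) ∂P)) ^ 2)) :=
  statement11_general P n X b hX hrange hindep t ht
end

section
/- Let b > 0 and let X_1, …, X_n be independent random variables with P(X_i ≤ b) = 1 and E|X_i|^3 < ∞. Set μ^2 := ∑_{i=1}^n E[X_i^2] and μ^3 := ∑_{i=1}^n E[max(X_i^3, 0)], and assume μ^2 > 0, μ^3 > 0 and b μ^2 ≠ μ^3. Let t > 0, α_0 := 1 + t b^2/μ^3, α_1 := b μ^2/μ^3 − 1, and let y be the unique positive solution of exp(x) = α_0 − α_1 x. Then t/b − (t/b + μ^2/b^2) y + ( μ^2/(2b^2) − μ^3/(2b^3) ) y^2 ≤ −(μ^2/b^2) · ( (bt/μ^2 + 1) · ln(bt/μ^2 + 1) − bt/μ^2 ); that is, the generalized Bennett bound using the first three moments is tighter than Bennett's bound. -/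
/-!
Substituting `x = λ b`, Bennett's bound is the minimum of `bennettExponent`, attained at
`x₀ = log (b t / μ2 + 1)`, and the three-moment bound is the value of `threeMomentExponent` at its
critical point `y`. From `X ≤ b` we get `max (X³) 0 ≤ b X²`, so `μ3 ≤ b μ2`; then for `x ≥ 0` the
two exponents differ by `(b μ2 - μ3) / b³ · (eˣ - 1 - x - x²/2) ≥ 0`, and the convexity of `exp`
makes `y` a global minimiser of the three-moment exponent. So the three-moment bound is at most its
value at `x₀`, which is at most Bennett's bound.
-/

open Real Finset MeasureTheory

noncomputable section

def bennettExponent (μ2 b t x : ℝ) : ℝ :=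
  -t * x / b + μ2 / b ^ 2 * (exp x - 1 - x)

def threeMomentExponent (μ2 μ3 b t x : ℝ) : ℝ :=
  -t * x / b + μ2 / b ^ 2 * (x ^ 2 / 2) + μ3 / b ^ 3 * (exp x - 1 - x - x ^ 2 / 2)

end

section Moments

lemma max_pow_three_zero_le_mul_sq {x b : ℝ} (hb : 0 ≤ b) (hx : x ≤ b) :
    max (x ^ 3) 0 ≤ b * x ^ 2 := by
  rcases le_total 0 x with h | h
  · rw [max_eq_left (by positivity)]
    nlinarith [sq_nonneg x]
  · exact max_le (by nlinarith [sq_nonneg x]) (by positivity)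

lemma sq_le_one_add_abs_pow_three (x : ℝ) : x ^ 2 ≤ 1 + |x| ^ 3 := by
  rw [← sq_abs]
  rcases le_total |x| 1 with h | h <;> nlinarith [abs_nonneg x]

variable {Ω : Type*} [MeasurableSpace Ω] {P : Measure Ω} {X : Ω → ℝ}

lemma integrable_sq_of_integrable_abs_pow_three [IsFiniteMeasure P]
    (hX : AEStronglyMeasurable X P) (hint : Integrable (fun ω => |X ω| ^ 3) P) :
    Integrable (fun ω => X ω ^ 2) P :=
  ((integrable_const 1).add hint).mono' (hX.pow 2) <| .of_forall fun ω => by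
    simpa [abs_of_nonneg (sq_nonneg (X ω))] using sq_le_one_add_abs_pow_three (X ω)

lemma integral_max_pow_three_zero_le [IsFiniteMeasure P] {b : ℝ} (hb : 0 ≤ b)
    (hX : AEStronglyMeasurable X P) (hXb : ∀ᵐ ω ∂P, X ω ≤ b)
    (hint : Integrable (fun ω => |X ω| ^ 3) P) :
    ∫ ω, max (X ω ^ 3) 0 ∂P ≤ b * ∫ ω, X ω ^ 2 ∂P := by
  rw [← integral_const_mul]
  refine integral_mono_of_nonneg (.of_forall fun ω => le_max_right _ _)
    ((integrable_sq_of_integrable_abs_pow_three hX hint).const_mul b) ?_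
  filter_upwards [hXb] with ω hω
  exact max_pow_three_zero_le_mul_sq hb hω

end Moments

section Exponents

variable {μ2 μ3 b t : ℝ}

lemma bennettExponent_log (hb : 0 < b) (hμ2 : 0 < μ2) (ht : 0 ≤ t) :
    bennettExponent μ2 b t (log (b * t / μ2 + 1)) =
      -(μ2 / b ^ 2) * ((b * t / μ2 + 1) * log (b * t / μ2 + 1) - b * t / μ2) := by
  have hpos : 0 < b * t / μ2 + 1 := by positivity
  rw [bennettExponent, exp_log hpos]
  field_simp
  ring

lemma threeMomentExponent_le_bennettExponent (hb : 0 < b) (hμ3 : μ3 ≤ b * μ2) {x : ℝ}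
    (hx : 0 ≤ x) : threeMomentExponent μ2 μ3 b t x ≤ bennettExponent μ2 b t x := by
  have hexp : 0 ≤ exp x - 1 - x - x ^ 2 / 2 := by linarith [quadratic_le_exp_of_nonneg hx]
  have key : bennettExponent μ2 b t x - threeMomentExponent μ2 μ3 b t x =
      (b * μ2 - μ3) / b ^ 3 * (exp x - 1 - x - x ^ 2 / 2) := by
    rw [bennettExponent, threeMomentExponent]
    field_simp
    ring
  have : 0 ≤ (b * μ2 - μ3) / b ^ 3 * (exp x - 1 - x - x ^ 2 / 2) :=
    mul_nonneg (div_nonneg (by linarith) (by positivity)) hexp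
  linarith

/-- `hcrit` says that `y` is a critical point of `threeMomentExponent μ2 μ3 b t`. -/
lemma threeMomentExponent_le_of_critical (hb : 0 < b) (hμ3 : 0 ≤ μ3) (hμ3le : μ3 ≤ b * μ2)
    {y : ℝ} (hcrit : μ3 * (exp y - 1 - y) = t * b ^ 2 - b * μ2 * y) (x : ℝ) :
    threeMomentExponent μ2 μ3 b t y ≤ threeMomentExponent μ2 μ3 b t x := by
  have htangent : exp y * (1 + (x - y)) ≤ exp x := by
    calc exp y * (1 + (x - y)) ≤ exp y * exp (x - y) := by
          gcongr; linarith [add_one_le_exp (x - y)]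
      _ = exp x := by rw [← exp_add]; ring_nf
  have hdiff : b ^ 3 * (threeMomentExponent μ2 μ3 b t x - threeMomentExponent μ2 μ3 b t y) =
      μ3 * (exp x - exp y * (1 + (x - y))) + (b * μ2 - μ3) / 2 * (x - y) ^ 2 := by
    rw [threeMomentExponent, threeMomentExponent]
    field_simp
    linear_combination 2 * (x - y) * hcrit
  have : 0 ≤ b ^ 3 * (threeMomentExponent μ2 μ3 b t x - threeMomentExponent μ2 μ3 b t y) := by
    rw [hdiff]
    have := mul_nonneg hμ3 (sub_nonneg.2 htangent)
    have := mul_nonneg (div_nonneg (sub_nonneg.2 hμ3le) zero_le_two) (sq_nonneg (x - y))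
    linarith
  exact sub_nonneg.1 ((mul_nonneg_iff_of_pos_left (pow_pos hb 3)).1 this)

lemma threeMomentExponent_of_critical (hb : b ≠ 0) {y : ℝ}
    (hcrit : μ3 * (exp y - 1 - y) = t * b ^ 2 - b * μ2 * y) :
    threeMomentExponent μ2 μ3 b t y =
      t / b - (t / b + μ2 / b ^ 2) * y + (μ2 / (2 * b ^ 2) - μ3 / (2 * b ^ 3)) * y ^ 2 := by
  rw [threeMomentExponent]
  linear_combination (norm := skip) (1 / b ^ 3) * hcrit
  field_simp
  ring

end Exponents

theorem statement16_general {Ω : Type*} [MeasurableSpace Ω] (P : Measure Ω) [IsProbabilityMeasure P]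
    (b : ℝ) (hb : 0 < b)
    (n : ℕ) (X : Fin n → Ω → ℝ)
    (hX : ∀ i, Measurable (X i))
    (hXb : ∀ i, P {ω | X i ω ≤ b} = 1)
    (hint : ∀ i, Integrable (fun ω => |X i ω| ^ 3) P)
    (μ2 μ3 : ℝ)
    (hμ2 : μ2 = ∑ i, ∫ ω, (X i ω) ^ 2 ∂P)
    (hμ3 : μ3 = ∑ i, ∫ ω, max ((X i ω) ^ 3) 0 ∂P)
    (hμ2pos : 0 < μ2) (hμ3pos : 0 < μ3)
    (t : ℝ) (ht : 0 < t)
    (y : ℝ)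
    (hysol : Real.exp y = (1 + t * b ^ 2 / μ3) - (b * μ2 / μ3 - 1) * y) :
    t / b - (t / b + μ2 / b ^ 2) * y + (μ2 / (2 * b ^ 2) - μ3 / (2 * b ^ 3)) * y ^ 2 ≤
      -(μ2 / b ^ 2) *
        ((b * t / μ2 + 1) * Real.log (b * t / μ2 + 1) - b * t / μ2) := by
  have hXb_ae : ∀ i, ∀ᵐ ω ∂P, X i ω ≤ b := fun i =>
    (ae_iff_measure_eq (measurableSet_le (hX i) measurable_const).nullMeasurableSet).2
      (by rw [hXb i, measure_univ])
  have hμ3le : μ3 ≤ b * μ2 := by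
    rw [hμ2, hμ3, mul_sum]
    exact sum_le_sum fun i _ =>
      integral_max_pow_three_zero_le hb.le (hX i).aestronglyMeasurable (hXb_ae i) (hint i)
  have hcrit : μ3 * (exp y - 1 - y) = t * b ^ 2 - b * μ2 * y := by
    rw [hysol]
    field_simp
    ring
  have hlog : 0 ≤ log (b * t / μ2 + 1) :=
    log_nonneg (by linarith [div_pos (mul_pos hb ht) hμ2pos])
  calc _ = threeMomentExponent μ2 μ3 b t y := (threeMomentExponent_of_critical hb.ne' hcrit).symm
    _ ≤ threeMomentExponent μ2 μ3 b t (log (b * t / μ2 + 1)) :=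
      threeMomentExponent_le_of_critical hb hμ3pos.le hμ3le hcrit _
    _ ≤ bennettExponent μ2 b t (log (b * t / μ2 + 1)) :=
      threeMomentExponent_le_bennettExponent hb hμ3le hlog
    _ = _ := bennettExponent_log hb hμ2pos ht.le

theorem statement16 {Ω : Type*} [MeasurableSpace Ω] (P : Measure Ω) [IsProbabilityMeasure P]
    (b : ℝ) (hb : 0 < b)
    (n : ℕ) (X : Fin n → Ω → ℝ)
    (hX : ∀ i, Measurable (X i))
    (hXb : ∀ i, P {ω | X i ω ≤ b} = 1)
    (hint : ∀ i, Integrable (fun ω => |X i ω| ^ 3) P)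
    (μ2 μ3 : ℝ)
    (hμ2 : μ2 = ∑ i, ∫ ω, (X i ω) ^ 2 ∂P)
    (hμ3 : μ3 = ∑ i, ∫ ω, max ((X i ω) ^ 3) 0 ∂P)
    (hμ2pos : 0 < μ2) (hμ3pos : 0 < μ3) (hne : b * μ2 ≠ μ3)
    (t : ℝ) (ht : 0 < t)
    (y : ℝ) (hy : 0 < y)
    (hysol : Real.exp y = (1 + t * b ^ 2 / μ3) - (b * μ2 / μ3 - 1) * y) :
    t / b - (t / b + μ2 / b ^ 2) * y + (μ2 / (2 * b ^ 2) - μ3 / (2 * b ^ 3)) * y ^ 2 ≤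
      -(μ2 / b ^ 2) *
        ((b * t / μ2 + 1) * Real.log (b * t / μ2 + 1) - b * t / μ2) :=
  statement16_general P b hb n X hX hXb hint μ2 μ3 hμ2 hμ3 hμ2pos hμ3pos t ht y hysol
end
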